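/- arXiv:math/0511310 — 2 statements merged into one kernel-verified Lean document; each statement's English description precedes it below -/
import Mathlib

section
/- Let A be a divisible ordered abelian group with distinct convex subgroups H₁ ⊂ H₂ ⊂ … ⊂ H_k, let m₁,…,m_k be positive integers, and let B be a divisible ordered abelian group extension of A containing, for each 1 ≤ i ≤ k, a tuple b_i = (c_{i,1},…,c_{i,m_i}) realizing q_{H_i}^{m_i} over A. Then: (a) the elements c_{i,j} (1 ≤ i ≤ k, 1 ≤ j ≤ m_i) are ℚ-linearly independent over A, i.e. if a rational linear combination Σ q_{i,j} c_{i,j} lies in A then all q_{i,j} = 0; (b) if B equals the ℚ-linear span of A together with all the c_{i,j}, and B′ is another divisible ordered abelian group extension of A equal to the ℚ-linear span of A together with tuples b′_i = (c′_{i,1},…,c′_{i,m_i}) realizing q_{H_i}^{m_i} over A, then there is an isomorphism of ordered groups B → B′ fixing A pointwise and sending each c_{i,j} to c′_{i,j}. -/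
universe u v

namespace Stmt18

/-- The (ordered abelian) group `A` is divisible: every element is divisible by every
positive natural number. -/
def NatDivisible (A : Type u) [AddCommGroup A] : Prop :=
  ∀ k : ℕ, 0 < k → ∀ a : A, ∃ b : A, k • b = a

/-- The order embedding `e : A → B` is an i-extension: `e` is a strictly monotone group
embedding, and there is no `b ∈ B` with `b > 0` such that the cut
`ct_A(b) = {a ∈ A : 0 ≤ e a ≤ b}` is closed under addition. -/
def IsIExtension {A : Type u} {B : Type v} [AddCommGroup A] [LinearOrder A] [IsOrderedAddMonoid A]
    [AddCommGroup B] [LinearOrder B] [IsOrderedAddMonoid B] (e : A →+ B) : Prop :=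
  StrictMono ⇑e ∧
    ∀ b : B, 0 < b →
      ¬ (∀ x y : A, (0 ≤ e x ∧ e x ≤ b) → (0 ≤ e y ∧ e y ≤ b) →
          (0 ≤ e (x + y) ∧ e (x + y) ≤ b))
/-- The tuple `c = (c₁, …, c_m)` (with `c 0 = c₁` the largest entry) realizes
`q_H ^ m` over `A`, inside the extension `e : A → B`:
`h < c_m ≪ c_{m−1} ≪ … ≪ c₁ < a` for every `h ∈ H` and every `a ∈ A` with `a ≥ 0`,
`a ∉ H` (where `x ≪ y` means `n • x < y` for every `n : ℕ`). -/
def RealizesQ {A : Type u} {B : Type v} [AddCommGroup A] [LinearOrder A] [IsOrderedAddMonoid A]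
    [AddCommGroup B] [LinearOrder B] [IsOrderedAddMonoid B] (e : A →+ B) (H : AddSubgroup A)
    {m : ℕ} (c : Fin m → B) : Prop :=
  (∀ h ∈ H, ∀ j, e h < c j) ∧
  (∀ a : A, 0 ≤ a → a ∉ H → ∀ j, c j < e a) ∧
  (∀ j j' : Fin m, j < j' → ∀ n : ℕ, n • c j' < c j)

section AuxC

open Finset

variable {k : ℕ} {m : Fin k → ℕ}

/-- The linear combination `∑ z i j • c i j`. -/
def sumC {B : Type v} [AddCommGroup B] (c : (i : Fin k) → Fin (m i) → B)
    (z : (i : Fin k) → Fin (m i) → ℤ) : B :=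
  ∑ i : Fin k, ∑ j : Fin (m i), z i j • c i j

lemma sumC_sigma {B : Type v} [AddCommGroup B] (c : (i : Fin k) → Fin (m i) → B)
    (z : (i : Fin k) → Fin (m i) → ℤ) :
    sumC c z = ∑ p : Σ i : Fin k, Fin (m i), z p.1 p.2 • c p.1 p.2 := by
  rw [sumC, ← Finset.univ_sigma_univ, Finset.sum_sigma]

lemma sumC_zero {B : Type v} [AddCommGroup B] (c : (i : Fin k) → Fin (m i) → B) :
    sumC c (fun _ _ => 0) = 0 := by simp [sumC]

lemma sumC_neg {B : Type v} [AddCommGroup B] (c : (i : Fin k) → Fin (m i) → B)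
    (z : (i : Fin k) → Fin (m i) → ℤ) :
    sumC c (fun i j => -(z i j)) = -(sumC c z) := by
  simp [sumC, neg_smul, Finset.sum_neg_distrib]

lemma sumC_add {B : Type v} [AddCommGroup B] (c : (i : Fin k) → Fin (m i) → B)
    (z w : (i : Fin k) → Fin (m i) → ℤ) :
    sumC c (fun i j => z i j + w i j) = sumC c z + sumC c w := by
  simp [sumC, add_smul, Finset.sum_add_distrib]

lemma sumC_sub {B : Type v} [AddCommGroup B] (c : (i : Fin k) → Fin (m i) → B)
    (z w : (i : Fin k) → Fin (m i) → ℤ) :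
    sumC c (fun i j => z i j - w i j) = sumC c z - sumC c w := by
  simp [sumC, sub_smul, Finset.sum_sub_distrib]

lemma sumC_nsmul {B : Type v} [AddCommGroup B] (c : (i : Fin k) → Fin (m i) → B)
    (z : (i : Fin k) → Fin (m i) → ℤ) (n : ℕ) :
    sumC c (fun i j => (n : ℤ) * z i j) = n • sumC c z := by
  rw [sumC, sumC, Finset.smul_sum]
  refine Finset.sum_congr rfl fun i _ => ?_
  rw [Finset.smul_sum]
  refine Finset.sum_congr rfl fun j _ => ?_
  rw [mul_smul, natCast_zsmul]

/-- `(i, j)` is the archimedean-largest index with a nonzero coefficient. -/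
def IsTop (z : (i : Fin k) → Fin (m i) → ℤ) (i : Fin k) (j : Fin (m i)) : Prop :=
  z i j ≠ 0 ∧ ∀ i' j', z i' j' ≠ 0 → i' < i ∨ (i' = i ∧ (j : ℕ) ≤ (j' : ℕ))

lemma exists_isTop (z : (i : Fin k) → Fin (m i) → ℤ) (hz : ¬ ∀ i j, z i j = 0) :
    ∃ i j, IsTop z i j := by
  classical
  push_neg at hz
  obtain ⟨i₀, j₀, h₀⟩ := hz
  set s : Finset (Fin k) := univ.filter (fun i => ∃ j, z i j ≠ 0) with hs_def
  have hs : s.Nonempty := ⟨i₀, by simp [hs_def]; exact ⟨j₀, h₀⟩⟩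
  obtain ⟨i, hi_mem, hi_max⟩ := s.exists_max_image id hs
  have hi : ∃ j, z i j ≠ 0 := by
    have := hi_mem; simp [hs_def] at this; exact this
  set t : Finset (Fin (m i)) := univ.filter (fun j => z i j ≠ 0) with ht_def
  have ht : t.Nonempty := by
    obtain ⟨j, hj⟩ := hi; exact ⟨j, by simp [ht_def, hj]⟩
  obtain ⟨j, hj_mem, hj_min⟩ := t.exists_min_image (fun j => (j : ℕ)) ht
  refine ⟨i, j, ?_, ?_⟩
  · have := hj_mem; simp [ht_def] at this; exact this
  · intro i' j' hz'
    have hi' : i' ∈ s := by simp [hs_def]; exact ⟨j', hz'⟩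
    have hle : i' ≤ i := hi_max i' hi'
    rcases lt_or_eq_of_le hle with h | h
    · exact Or.inl h
    · subst h
      refine Or.inr ⟨rfl, hj_min j' ?_⟩
      simp [ht_def, hz']

/-- The coefficient function picking out a single `c i j`. -/
def zsingle (i : Fin k) (j : Fin (m i)) : (i' : Fin k) → Fin (m i') → ℤ :=
  fun i' j' => if i' = i ∧ (j' : ℕ) = (j : ℕ) then 1 else 0

lemma sumC_zsingle {B : Type v} [AddCommGroup B] (c : (i : Fin k) → Fin (m i) → B)
    (i : Fin k) (j : Fin (m i)) : sumC c (zsingle i j) = c i j := by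
  classical
  rw [sumC]
  rw [Fintype.sum_eq_single i (fun i' hi' => ?_)]
  · rw [Fintype.sum_eq_single j (fun j' hj' => ?_)]
    · simp [zsingle]
    · have : ¬ ((j' : ℕ) = (j : ℕ)) := fun h => hj' (Fin.ext h)
      simp [zsingle, this]
  · simp [zsingle, hi']

end AuxC

/-- The positivity predicate, purely in terms of the data `(a, z)`. -/
def Pos {A : Type u} [AddCommGroup A] [LinearOrder A] [IsOrderedAddMonoid A] {k : ℕ} {m : Fin k → ℕ}
    (H : Fin k → AddSubgroup A) (a : A) (z : (i : Fin k) → Fin (m i) → ℤ) : Prop :=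
  ((∀ i j, z i j = 0) ∧ 0 < a) ∨
    ∃ i j, IsTop z i j ∧ ((a ∈ H i ∧ 0 < z i j) ∨ (a ∉ H i ∧ 0 < a))

section One

variable {A : Type u} [AddCommGroup A] [LinearOrder A] [IsOrderedAddMonoid A] {B : Type v} [AddCommGroup B] [LinearOrder B] [IsOrderedAddMonoid B]
variable {k : ℕ} {m : Fin k → ℕ} {H : Fin k → AddSubgroup A}
variable {e : A →+ B} {c : (i : Fin k) → Fin (m i) → B}

lemma c_pos (hc : ∀ i, RealizesQ e (H i) (c i)) (i : Fin k) (j : Fin (m i)) : 0 < c i j := by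
  have := (hc i).1 0 (H i).zero_mem j
  simpa using this

/-- Cancellation of `nsmul` in a linearly ordered group. -/
lemma nsmul_left_cancel {N : ℕ} (hN : 0 < N) {x y : B} (h : N • x = N • y) : x = y := by
  rcases lt_trichotomy x y with hlt | heq | hgt
  · exact absurd h (ne_of_lt (nsmul_lt_nsmul_right hN.ne' hlt))
  · exact heq
  · exact absurd h.symm (ne_of_lt (nsmul_lt_nsmul_right hN.ne' hgt))

/-- Archimedean dominance between realizing elements. -/
lemma dom (hA : NatDivisible A) (hchain : ∀ i j : Fin k, i < j → H i < H j)
    (hc : ∀ i, RealizesQ e (H i) (c i))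
    {i i' : Fin k} {j : Fin (m i)} {j' : Fin (m i')}
    (h : i < i' ∨ (i = i' ∧ (j' : ℕ) < (j : ℕ))) (w : ℤ) : w • c i j < c i' j' := by
  rcases le_or_gt w 0 with hw | hw
  · calc w • c i j ≤ 0 := by
          calc w • c i j ≤ (0:ℤ) • c i j := zsmul_le_zsmul_left (c_pos hc i j).le hw
          _ = 0 := zero_zsmul _
      _ < c i' j' := c_pos hc i' j'
  · lift w to ℕ using hw.le with n
    have hn : 0 < n := by exact_mod_cast hw
    rw [natCast_zsmul]
    rcases h with hlt | ⟨rfl, hjj⟩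
    · obtain ⟨h₁, h₁mem, h₁not⟩ := SetLike.exists_of_lt (hchain i i' hlt)
      set h₂ := |h₁| with hh₂
      have h₂mem : h₂ ∈ H i' := by
        rcases abs_choice h₁ with h | h <;> rw [hh₂, h]
        · exact h₁mem
        · exact neg_mem h₁mem
      have h₂not : h₂ ∉ H i := by
        intro hmem
        apply h₁not
        rcases abs_choice h₁ with h | h
        · rwa [hh₂, h] at hmem
        · have := neg_mem hmem; rwa [hh₂, h, neg_neg] at this
      have h₂pos : 0 < h₂ := by
        rcases (abs_nonneg h₁).lt_or_eq with h | h
        · exact h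
        · exfalso; apply h₂not; rw [hh₂, ← h]; exact (H i).zero_mem
      obtain ⟨h₀, hh₀⟩ := hA n hn h₂
      have h₀not : h₀ ∉ H i := by
        intro hmem
        exact h₂not (hh₀ ▸ AddSubgroup.nsmul_mem (H i) hmem n)
      have h₀pos : 0 < h₀ := by
        by_contra hcon
        push_neg at hcon
        have : h₂ ≤ 0 := hh₀ ▸ nsmul_nonpos hcon n
        exact absurd this (not_le.mpr h₂pos)
      calc n • c i j < n • e h₀ :=
            nsmul_lt_nsmul_right hn.ne' ((hc i).2.1 h₀ h₀pos.le h₀not j)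
        _ = e (n • h₀) := (map_nsmul e n h₀).symm
        _ = e h₂ := by rw [hh₀]
        _ < c i' j' := (hc i').1 h₂ h₂mem j'
    · exact (hc i).2.2 j' j (Fin.lt_def.mpr hjj) n

/-- A finite sum of terms individually ≪ `d` is ≪ `d`. -/
lemma small_abs_sum {ι : Type*} (S : Finset ι) (t : ι → B) {d : B} (hd : 0 < d)
    (h : ∀ p ∈ S, ∀ n : ℕ, n • |t p| < d) : ∀ n : ℕ, n • |∑ p ∈ S, t p| < d := by
  classical
  induction S using Finset.induction_on with
  | empty => intro n; simpa using hd
  | @insert a S ha ih =>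
    intro n
    have ha' := h a (Finset.mem_insert_self a S) (2 * n)
    have hS := ih (fun p hp n => h p (Finset.mem_insert_of_mem hp) n) (2 * n)
    rw [two_mul, add_nsmul] at ha' hS
    have hsum : n • |t a| + n • |∑ p ∈ S, t p| < d := by
      by_contra hcon
      push_neg at hcon
      have h1 : d + d ≤ (n • |t a| + n • |∑ p ∈ S, t p|) + (n • |t a| + n • |∑ p ∈ S, t p|) :=
        add_le_add hcon hcon
      have h2 : (n • |t a| + n • |t a|) + (n • |∑ p ∈ S, t p| + n • |∑ p ∈ S, t p|) < d + d :=
        add_lt_add ha' hS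
      rw [add_add_add_comm] at h2
      exact absurd (h1.trans_lt h2) (lt_irrefl _)
    calc n • |∑ p ∈ insert a S, t p| = n • |t a + ∑ p ∈ S, t p| := by rw [Finset.sum_insert ha]
      _ ≤ n • (|t a| + |∑ p ∈ S, t p|) := nsmul_le_nsmul_right (abs_add_le _ _) n
      _ = n • |t a| + n • |∑ p ∈ S, t p| := smul_add n _ _
      _ < d := hsum

lemma half_add_lt {x y d : B} (hx : x + x < d) (hy : y + y < d) : x + y < d := by
  by_contra hcon
  push_neg at hcon
  have h1 : d + d ≤ (x + y) + (x + y) := add_le_add hcon hcon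
  have h2 : (x + x) + (y + y) < d + d := add_lt_add hx hy
  rw [add_add_add_comm] at h2
  exact absurd (h1.trans_lt h2) (lt_irrefl _)

lemma key_pos (hA : NatDivisible A) (hchain : ∀ i j : Fin k, i < j → H i < H j)
    (he : StrictMono ⇑e) (hc : ∀ i, RealizesQ e (H i) (c i))
    {a : A} {z : (i : Fin k) → Fin (m i) → ℤ} (h : Pos H a z) :
    0 < e a + sumC c z := by
  classical
  rcases h with ⟨hz, ha⟩ | ⟨i, j, ⟨hzij, htop⟩, hcase⟩
  · have h0 : sumC c z = 0 := by simp [sumC, hz]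
    rw [h0, add_zero]
    have := he ha
    rwa [map_zero] at this
  · set d := c i j with hd_def
    have hd : 0 < d := c_pos hc i j
    set R : B := ∑ p ∈ (Finset.univ.erase (⟨i, j⟩ : Σ i : Fin k, Fin (m i))),
      z p.1 p.2 • c p.1 p.2 with hR_def
    have hsplit : sumC c z = z i j • d + R := by
      rw [sumC_sigma,
        ← Finset.add_sum_erase _ _ (Finset.mem_univ (⟨i, j⟩ : Σ i : Fin k, Fin (m i)))]
    have hR : ∀ n : ℕ, n • |R| < d := by
      refine small_abs_sum _ _ hd ?_
      intro p hp n
      rcases eq_or_ne (z p.1 p.2) 0 with h0 | h0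
      · simp [h0, hd]
      · have hne : p ≠ (⟨i, j⟩ : Σ i : Fin k, Fin (m i)) := Finset.ne_of_mem_erase hp
        have hlt : p.1 < i ∨ (p.1 = i ∧ ((j : ℕ) < (p.2 : ℕ))) := by
          rcases htop p.1 p.2 h0 with hlt | ⟨heq, hle⟩
          · exact Or.inl hlt
          · refine Or.inr ⟨heq, lt_of_le_of_ne hle ?_⟩
            intro hval
            apply hne
            obtain ⟨p1, p2⟩ := p
            dsimp at heq hval ⊢
            subst heq
            have : p2 = j := Fin.ext hval.symm
            rw [this]
        have habs : |z p.1 p.2 • c p.1 p.2| = |z p.1 p.2| • c p.1 p.2 := by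
          rw [abs_zsmul, abs_of_pos (c_pos hc p.1 p.2)]
        rw [habs, show n • (|z p.1 p.2| • c p.1 p.2)
            = ((n : ℤ) * |z p.1 p.2|) • c p.1 p.2 by rw [mul_smul, natCast_zsmul]]
        exact dom hA hchain hc hlt _
    rcases hcase with ⟨hmem, hzpos⟩ | ⟨hnot, hapos⟩
    · -- `a ∈ H i`: sign is the sign of the top coefficient
      have hea : ∀ n : ℕ, n • |e a| < d := by
        intro n
        have heabs : |e a| = e |a| := by
          rcases le_total 0 a with h | h
          · rw [abs_of_nonneg h, abs_of_nonneg]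
            have := he.monotone h
            rwa [map_zero] at this
          · rw [abs_of_nonpos h, abs_of_nonpos, map_neg]
            have := he.monotone h
            rwa [map_zero] at this
        have hamem : |a| ∈ H i := by
          rcases abs_choice a with h | h <;> rw [h]
          · exact hmem
          · exact neg_mem hmem
        rw [heabs, ← map_nsmul]
        exact (hc i).1 _ (AddSubgroup.nsmul_mem (H i) hamem n) j
      have habs : |e a + R| < d := by
        have h1 : |e a| + |e a| < d := by have := hea 2; rwa [two_nsmul] at this
        have h2 : |R| + |R| < d := by have := hR 2; rwa [two_nsmul] at this
        exact lt_of_le_of_lt (abs_add_le _ _) (half_add_lt h1 h2)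
      have hzd : d ≤ z i j • d := by
        calc d = (1 : ℤ) • d := (one_zsmul d).symm
          _ ≤ z i j • d := zsmul_le_zsmul_left hd.le hzpos
      calc (0 : B) = -d + d := by rw [neg_add_cancel]
        _ < (e a + R) + z i j • d := add_lt_add_of_lt_of_le (neg_lt_of_abs_lt habs) hzd
        _ = e a + sumC c z := by rw [hsplit]; abel
    · -- `a ∉ H i`: sign is the sign of `a`
      set M := (z i j).natAbs + 1 with hM_def
      obtain ⟨a', ha'⟩ := hA M (Nat.succ_pos _) a
      have ha'not : a' ∉ H i := fun hmem => hnot (ha' ▸ AddSubgroup.nsmul_mem (H i) hmem M)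
      have ha'pos : 0 < a' := by
        by_contra hcon
        push_neg at hcon
        exact absurd (ha' ▸ nsmul_nonpos hcon M) (not_le.mpr hapos)
      have hda' : d < e a' := (hc i).2.1 a' ha'pos.le ha'not j
      have hMd : M • d < e a := by
        calc M • d < M • e a' := nsmul_lt_nsmul_right (Nat.succ_ne_zero _) hda'
          _ = e (M • a') := (map_nsmul e M a').symm
          _ = e a := by rw [ha']
      have hbound : |z i j • d + R| < M • d := by
        have h1 : |z i j • d| = |z i j| • d := by rw [abs_zsmul, abs_of_pos hd]
        have h2 : |R| < d := by have := hR 1; rwa [one_nsmul] at this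
        calc |z i j • d + R| ≤ |z i j • d| + |R| := abs_add_le _ _
          _ < |z i j| • d + d := by rw [h1]; exact add_lt_add_right h2 _
          _ = M • d := by
            have hM : (M : ℤ) = |z i j| + 1 := by
              rw [hM_def, Int.abs_eq_natAbs]
              push_cast
              ring
            rw [← natCast_zsmul d M, hM, add_zsmul, one_zsmul]
      calc (0 : B) < e a - M • d := sub_pos.mpr hMd
        _ = e a + -(M • d) := by rw [sub_eq_add_neg]
        _ < e a + (z i j • d + R) := add_lt_add_right (neg_lt_of_abs_lt hbound) _
        _ = e a + sumC c z := by rw [hsplit]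

lemma trichotomy {a : A} {z : (i : Fin k) → Fin (m i) → ℤ}
    (h : ¬ (a = 0 ∧ ∀ i j, z i j = 0)) :
    Pos H a z ∨ Pos H (-a) (fun i j => -(z i j)) := by
  by_cases hz : ∀ i j, z i j = 0
  · have ha : a ≠ 0 := fun h0 => h ⟨h0, hz⟩
    rcases ha.lt_or_gt with h' | h'
    · exact Or.inr (Or.inl ⟨fun i j => neg_eq_zero.mpr (hz i j), by simpa using h'⟩)
    · exact Or.inl (Or.inl ⟨hz, h'⟩)
  · obtain ⟨i, j, htop⟩ := exists_isTop z hz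
    have htop' : IsTop (fun i j => -(z i j)) i j :=
      ⟨neg_ne_zero.mpr htop.1, fun i' j' h' => htop.2 i' j' (by simpa using h')⟩
    by_cases hmem : a ∈ H i
    · rcases htop.1.lt_or_gt with h' | h'
      · exact Or.inr (Or.inr ⟨i, j, htop', Or.inl ⟨neg_mem hmem, by simpa using h'⟩⟩)
      · exact Or.inl (Or.inr ⟨i, j, htop, Or.inl ⟨hmem, h'⟩⟩)
    · have ha : a ≠ 0 := fun h0 => hmem (h0 ▸ (H i).zero_mem)
      have hmem' : -a ∉ H i := fun h' => hmem (by simpa using neg_mem h')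
      rcases ha.lt_or_gt with h' | h'
      · exact Or.inr (Or.inr ⟨i, j, htop', Or.inr ⟨hmem', by simpa using h'⟩⟩)
      · exact Or.inl (Or.inr ⟨i, j, htop, Or.inr ⟨hmem, h'⟩⟩)

lemma key_iff (hA : NatDivisible A) (hchain : ∀ i j : Fin k, i < j → H i < H j)
    (he : StrictMono ⇑e) (hc : ∀ i, RealizesQ e (H i) (c i))
    {a : A} {z : (i : Fin k) → Fin (m i) → ℤ} :
    0 < e a + sumC c z ↔ Pos H a z := by
  constructor
  · intro h
    by_cases h0 : a = 0 ∧ ∀ i j, z i j = 0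
    · exfalso
      obtain ⟨ha, hz⟩ := h0
      have : sumC c z = 0 := by simp [sumC, hz]
      rw [ha, this, map_zero, add_zero] at h
      exact lt_irrefl 0 h
    · rcases trichotomy h0 with hp | hp
      · exact hp
      · exfalso
        have := key_pos hA hchain he hc hp
        rw [map_neg, sumC_neg, ← neg_add] at this
        exact absurd h (not_lt.mpr (le_of_lt (neg_pos.mp this)))
  · exact key_pos hA hchain he hc

lemma key_eq_zero (hA : NatDivisible A) (hchain : ∀ i j : Fin k, i < j → H i < H j)
    (he : StrictMono ⇑e) (hc : ∀ i, RealizesQ e (H i) (c i))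
    {a : A} {z : (i : Fin k) → Fin (m i) → ℤ} (h : e a + sumC c z = 0) :
    a = 0 ∧ ∀ i j, z i j = 0 := by
  by_contra h0
  rcases trichotomy h0 with hp | hp
  · exact absurd h (ne_of_gt (key_pos hA hchain he hc hp))
  · have := key_pos hA hchain he hc hp
    rw [map_neg, sumC_neg, ← neg_add, h, neg_zero] at this
    exact lt_irrefl 0 this

end One

section Two

variable {A : Type u} [AddCommGroup A] [LinearOrder A] [IsOrderedAddMonoid A]
variable {k : ℕ} {m : Fin k → ℕ} {H : Fin k → AddSubgroup A}

lemma rep_unique {B : Type v} [AddCommGroup B] [LinearOrder B] [IsOrderedAddMonoid B]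
    {e : A →+ B} {c : (i : Fin k) → Fin (m i) → B}
    (hA : NatDivisible A) (hchain : ∀ i j : Fin k, i < j → H i < H j)
    (he : StrictMono ⇑e) (hc : ∀ i, RealizesQ e (H i) (c i))
    {x : B} {N N' : ℕ} {a a' : A} {z z' : (i : Fin k) → Fin (m i) → ℤ}
    (h1 : N • x = e a + sumC c z) (h2 : N' • x = e a' + sumC c z') :
    N' • a = N • a' ∧ ∀ i j, (N' : ℤ) * z i j = (N : ℤ) * z' i j := by
  have e1 : e (N' • a) + sumC c (fun i j => (N' : ℤ) * z i j) = N' • (N • x) := by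
    rw [sumC_nsmul, map_nsmul, ← smul_add, h1]
  have e2 : e (N • a') + sumC c (fun i j => (N : ℤ) * z' i j) = N • (N' • x) := by
    rw [sumC_nsmul, map_nsmul, ← smul_add, h2]
  have hcalc : e (N' • a - N • a')
      + sumC c (fun i j => (N' : ℤ) * z i j - (N : ℤ) * z' i j) = 0 := by
    rw [map_sub, sumC_sub, sub_add_sub_comm, e1, e2, smul_comm N' N x, sub_self]
  obtain ⟨ha, hz⟩ := key_eq_zero hA hchain he hc hcalc
  exact ⟨sub_eq_zero.mp ha, fun i j => sub_eq_zero.mp (hz i j)⟩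

lemma exists_map {B : Type v} {B' : Type w}
    [AddCommGroup B] [LinearOrder B] [IsOrderedAddMonoid B] [AddCommGroup B'] [LinearOrder B'] [IsOrderedAddMonoid B']
    (hA : NatDivisible A) (hchain : ∀ i j : Fin k, i < j → H i < H j)
    {e : A →+ B} {c : (i : Fin k) → Fin (m i) → B}
    (he : StrictMono ⇑e) (hc : ∀ i, RealizesQ e (H i) (c i))
    {e' : A →+ B'} {c' : (i : Fin k) → Fin (m i) → B'} (hB' : NatDivisible B')
    (hspan : ∀ x : B, ∃ N : ℕ, 0 < N ∧ ∃ (a : A) (z : (i : Fin k) → Fin (m i) → ℤ),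
      N • x = e a + sumC c z) :
    ∃ φ : B → B', ∀ (N : ℕ), 0 < N → ∀ (x : B) (a : A) (z : (i : Fin k) → Fin (m i) → ℤ),
      N • x = e a + sumC c z → N • φ x = e' a + sumC c' z := by
  have hch : ∀ x : B, ∃ y : B', ∃ N : ℕ, 0 < N ∧ ∃ (a : A) (z : (i : Fin k) → Fin (m i) → ℤ),
      N • x = e a + sumC c z ∧ N • y = e' a + sumC c' z := by
    intro x
    obtain ⟨N, hN, a, z, hx⟩ := hspan x
    obtain ⟨y, hy⟩ := hB' N hN (e' a + sumC c' z)
    exact ⟨y, N, hN, a, z, hx, hy⟩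
  choose φ N₀ hN₀ a₀ z₀ h₀ h₀' using hch
  refine ⟨φ, ?_⟩
  intro N hN x a z hx
  obtain ⟨hA1, hA2⟩ := rep_unique hA hchain he hc (h₀ x) hx
  apply nsmul_left_cancel (hN₀ x)
  calc (N₀ x) • (N • φ x) = N • ((N₀ x) • φ x) := smul_comm _ _ _
    _ = N • (e' (a₀ x) + sumC c' (z₀ x)) := by rw [h₀' x]
    _ = e' (N • a₀ x) + sumC c' (fun i j => (N : ℤ) * z₀ x i j) := by
        rw [smul_add, ← map_nsmul, ← sumC_nsmul]
    _ = e' ((N₀ x) • a) + sumC c' (fun i j => ((N₀ x : ℕ) : ℤ) * z i j) := by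
        rw [hA1]
        exact congrArg _ (congrArg _ (funext fun i => funext fun j => hA2 i j))
    _ = (N₀ x) • (e' a + sumC c' z) := by
        rw [smul_add, ← map_nsmul, ← sumC_nsmul]

end Two

/-- Lemma C6 of Haskell–Hrushovski–Macpherson.  `A` is a divisible
ordered abelian group with a strict chain `H 0 ⊂ H 1 ⊂ … ⊂ H (k-1)` of convex
subgroups, and `B` a divisible ordered abelian extension (strictly monotone embedding
`e`) containing, for each `i`, a tuple `c i` realizing `q_{H i} ^ (m i)` over `A`.
(a) The entries `c i j` are `ℚ`-linearly independent over `A`: an integer combination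
of them lying in `e '' A` has all coefficients `0` (divisibility makes this equivalent
to the rational statement).
(b) If moreover `B` is the `ℚ`-linear span of `A` and the entries (every `x ∈ B`
satisfies `N • x = e a + ∑ zᵢⱼ • cᵢⱼ` for some `N > 0`), then for any other such
extension `B'` with tuples `c'` there is an isomorphism of ordered groups `B ≃ B'`
fixing `A` pointwise and sending each `c i j` to `c' i j`. -/
theorem realizations_independent_and_unique {A : Type u} [AddCommGroup A] [LinearOrder A] [IsOrderedAddMonoid A]
    (hA : NatDivisible A)
    (k : ℕ) (H : Fin k → AddSubgroup A)
    (hconv : ∀ i : Fin k, ∀ h ∈ H i, ∀ a : A, 0 ≤ a → a ≤ h → a ∈ H i)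
    (hchain : ∀ i j : Fin k, i < j → H i < H j)
    (m : Fin k → ℕ) (hm : ∀ i, 0 < m i)
    {B : Type u} [AddCommGroup B] [LinearOrder B] [IsOrderedAddMonoid B] (hB : NatDivisible B)
    (e : A →+ B) (he : StrictMono ⇑e)
    (c : (i : Fin k) → Fin (m i) → B)
    (hc : ∀ i, RealizesQ e (H i) (c i)) :
    (∀ z : (i : Fin k) → Fin (m i) → ℤ,
      (∑ i : Fin k, ∑ j : Fin (m i), z i j • c i j) ∈ Set.range ⇑e →
      ∀ (i : Fin k) (j : Fin (m i)), z i j = 0) ∧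
    ((∀ x : B, ∃ N : ℕ, 0 < N ∧ ∃ (a : A) (z : (i : Fin k) → Fin (m i) → ℤ),
        N • x = e a + ∑ i : Fin k, ∑ j : Fin (m i), z i j • c i j) →
      ∀ (B' : Type u) [AddCommGroup B'] [LinearOrder B'] [IsOrderedAddMonoid B'], NatDivisible B' →
        ∀ (e' : A →+ B'), StrictMono ⇑e' →
        ∀ (c' : (i : Fin k) → Fin (m i) → B'),
          (∀ i, RealizesQ e' (H i) (c' i)) →
          (∀ x : B', ∃ N : ℕ, 0 < N ∧ ∃ (a : A) (z : (i : Fin k) → Fin (m i) → ℤ),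
            N • x = e' a + ∑ i : Fin k, ∑ j : Fin (m i), z i j • c' i j) →
          ∃ φ : B ≃+ B', StrictMono ⇑φ ∧ (∀ a : A, φ (e a) = e' a) ∧
            ∀ (i : Fin k) (j : Fin (m i)), φ (c i j) = c' i j) := by
  constructor
  · -- (a) linear independence over `A`
    intro z hz
    obtain ⟨a, ha⟩ := hz
    have ha' : sumC c z = e a := ha.symm
    have h0 : e (-a) + sumC c z = 0 := by rw [map_neg, ha', neg_add_cancel]
    exact (key_eq_zero hA hchain he hc h0).2
  · -- (b) uniqueness of the extension
    intro hspan B' _inst _inst2 _inst3 hB' e' he' c' hc' hspan'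
    have hspanC : ∀ x : B, ∃ N : ℕ, 0 < N ∧ ∃ (a : A) (z : (i : Fin k) → Fin (m i) → ℤ),
        N • x = e a + sumC c z := hspan
    have hspanC' : ∀ x : B', ∃ N : ℕ, 0 < N ∧ ∃ (a : A) (z : (i : Fin k) → Fin (m i) → ℤ),
        N • x = e' a + sumC c' z := hspan'
    obtain ⟨φ, hφ⟩ := exists_map hA hchain he hc (e' := e') (c' := c') hB' hspanC
    obtain ⟨ψ, hψ⟩ := exists_map hA hchain he' hc' (e' := e) (c' := c) hB hspanC'
    -- mutual inverses
    have hid : ∀ x : B, ψ (φ x) = x := by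
      intro x
      obtain ⟨N, hN, a, z, hx⟩ := hspanC x
      have h1 := hφ N hN x a z hx
      have h2 := hψ N hN (φ x) a z h1
      exact nsmul_left_cancel hN (h2.trans hx.symm)
    have hid' : ∀ y : B', φ (ψ y) = y := by
      intro y
      obtain ⟨N, hN, a, z, hy⟩ := hspanC' y
      have h1 := hψ N hN y a z hy
      have h2 := hφ N hN (ψ y) a z h1
      exact nsmul_left_cancel hN (h2.trans hy.symm)
    -- additivity
    have hadd : ∀ x y : B, φ (x + y) = φ x + φ y := by
      intro x y
      obtain ⟨N1, hN1, a1, z1, h1⟩ := hspanC x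
      obtain ⟨N2, hN2, a2, z2, h2⟩ := hspanC y
      have hx : (N1 * N2) • (x + y) = e (N2 • a1 + N1 • a2)
          + sumC c (fun i j => (N2 : ℤ) * z1 i j + (N1 : ℤ) * z2 i j) := by
        have e1 : (N1 * N2) • x = e (N2 • a1) + sumC c (fun i j => (N2 : ℤ) * z1 i j) := by
          rw [mul_comm, mul_smul, h1, smul_add, ← map_nsmul, ← sumC_nsmul]
        have e2 : (N1 * N2) • y = e (N1 • a2) + sumC c (fun i j => (N1 : ℤ) * z2 i j) := by
          rw [mul_smul, h2, smul_add, ← map_nsmul, ← sumC_nsmul]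
        rw [smul_add, e1, e2, map_add, sumC_add]
        abel
      have hy : (N1 * N2) • (φ x + φ y) = e' (N2 • a1 + N1 • a2)
          + sumC c' (fun i j => (N2 : ℤ) * z1 i j + (N1 : ℤ) * z2 i j) := by
        have f1 := hφ N1 hN1 x a1 z1 h1
        have f2 := hφ N2 hN2 y a2 z2 h2
        have e1 : (N1 * N2) • φ x = e' (N2 • a1) + sumC c' (fun i j => (N2 : ℤ) * z1 i j) := by
          rw [mul_comm, mul_smul, f1, smul_add, ← map_nsmul, ← sumC_nsmul]
        have e2 : (N1 * N2) • φ y = e' (N1 • a2) + sumC c' (fun i j => (N1 : ℤ) * z2 i j) := by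
          rw [mul_smul, f2, smul_add, ← map_nsmul, ← sumC_nsmul]
        rw [smul_add, e1, e2, map_add, sumC_add]
        abel
      have h3 := hφ (N1 * N2) (Nat.mul_pos hN1 hN2) (x + y) _ _ hx
      exact nsmul_left_cancel (Nat.mul_pos hN1 hN2) (h3.trans hy.symm)
    -- positivity is preserved
    have hpos : ∀ x : B, 0 < x → 0 < φ x := by
      intro x hx
      obtain ⟨N, hN, a, z, h1⟩ := hspanC x
      have h2 := hφ N hN x a z h1
      have hNx : 0 < e a + sumC c z := h1 ▸ nsmul_pos hx hN.ne'
      have hP : Pos H a z := (key_iff hA hchain he hc).mp hNx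
      have h3 : 0 < e' a + sumC c' z := key_pos hA hchain he' hc' hP
      rw [← h2] at h3
      by_contra hcon
      push_neg at hcon
      exact absurd h3 (not_lt.mpr (nsmul_nonpos hcon N))
    -- assemble the equivalence
    refine ⟨{ toFun := φ, invFun := ψ, left_inv := hid, right_inv := hid',
              map_add' := hadd }, ?_, ?_, ?_⟩
    · intro u v huv
      have h3 : φ u + φ (v - u) = φ v := by
        rw [← hadd]
        congr 1
        abel
      have h4 : 0 < φ (v - u) := hpos _ (sub_pos.mpr huv)
      show φ u < φ v
      rw [← h3]
      exact lt_add_of_pos_right _ h4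
    · intro a
      have h1 : (1 : ℕ) • e a = e a + sumC c (fun _ _ => 0) := by
        rw [one_nsmul, sumC_zero, add_zero]
      have h2 := hφ 1 Nat.one_pos (e a) a (fun _ _ => 0) h1
      rw [one_nsmul, sumC_zero, add_zero] at h2
      exact h2
    · intro i j
      have h1 : (1 : ℕ) • c i j = e 0 + sumC c (zsingle i j) := by
        rw [one_nsmul, map_zero, zero_add, sumC_zsingle]
      have h2 := hφ 1 Nat.one_pos (c i j) 0 (zsingle i j) h1
      rw [one_nsmul, map_zero, zero_add, sumC_zsingle] at h2
      exact h2

end Stmt18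
end

section
/- Let A be an i-complete divisible ordered abelian group and let B be a divisible ordered abelian group extension of A which is finitely generated over A, i.e. B is the ℚ-linear span of A together with finitely many elements. Then there exist finitely many distinct convex subgroups H₁,…,H_k of A, positive integers m₁,…,m_k, and tuples b_i ∈ B^{m_i} realizing q_{H_i}^{m_i} over A (1 ≤ i ≤ k), such that, letting D be the ℚ-linear span of A together with all entries of the b_i, the following holds: for every β ∈ B ∖ A there exist β₁, β₂ ∈ D ∖ A with β₁ ≤ β ≤ β₂ and {a ∈ A : a ≤ β₁} = {a ∈ A : a ≤ β} = {a ∈ A : a ≤ β₂}. -/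
universe u v

namespace Stmt19

/-- The (ordered abelian) group `A` is divisible: every element is divisible by every
positive natural number. -/
def NatDivisible (A : Type u) [AddCommGroup A] : Prop :=
  ∀ k : ℕ, 0 < k → ∀ a : A, ∃ b : A, k • b = a

/-- The order embedding `e : A → B` is an i-extension: `e` is a strictly monotone group
embedding, and there is no `b ∈ B` with `b > 0` such that the cut
`ct_A(b) = {a ∈ A : 0 ≤ e a ≤ b}` is closed under addition. -/
def IsIExtension {A : Type u} {B : Type v} [AddCommGroup A] [LinearOrder A] [IsOrderedAddMonoid A]
    [AddCommGroup B] [LinearOrder B] [IsOrderedAddMonoid B] (e : A →+ B) : Prop :=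
  StrictMono ⇑e ∧
    ∀ b : B, 0 < b →
      ¬ (∀ x y : A, (0 ≤ e x ∧ e x ≤ b) → (0 ≤ e y ∧ e y ≤ b) →
          (0 ≤ e (x + y) ∧ e (x + y) ≤ b))
/-- `A` is i-complete: every i-extension of `A` (into a divisible linearly ordered
abelian group, taken in the same universe, which is no loss of generality by the
`2 ^ 2 ^ |A|` cardinality bound on i-extensions) is surjective. -/
def IComplete (A : Type u) [AddCommGroup A] [LinearOrder A] [IsOrderedAddMonoid A] : Prop :=
  ∀ (B : Type u) [AddCommGroup B] [LinearOrder B] [IsOrderedAddMonoid B], NatDivisible B →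
    ∀ e : A →+ B, IsIExtension e → Function.Surjective ⇑e
/-- The tuple `c = (c₁, …, c_m)` (with `c 0 = c₁` the largest entry) realizes
`q_H ^ m` over `A`, inside the extension `e : A → B`:
`h < c_m ≪ c_{m−1} ≪ … ≪ c₁ < a` for every `h ∈ H` and every `a ∈ A` with `a ≥ 0`,
`a ∉ H` (where `x ≪ y` means `n • x < y` for every `n : ℕ`). -/
def RealizesQ {A : Type u} {B : Type v} [AddCommGroup A] [LinearOrder A] [IsOrderedAddMonoid A]
    [AddCommGroup B] [LinearOrder B] [IsOrderedAddMonoid B] (e : A →+ B) (H : AddSubgroup A)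
    {m : ℕ} (c : Fin m → B) : Prop :=
  (∀ h ∈ H, ∀ j, e h < c j) ∧
  (∀ a : A, 0 ≤ a → a ∉ H → ∀ j, c j < e a) ∧
  (∀ j j' : Fin m, j < j' → ∀ n : ℕ, n • c j' < c j)

section Real

variable {A : Type u} {B : Type v} [AddCommGroup A] [LinearOrder A] [IsOrderedAddMonoid A]
  [AddCommGroup B] [LinearOrder B] [IsOrderedAddMonoid B] (e : A →+ B)

/-- `b` is a positive element not in the image of `A` whose cut over `A` is closed
under addition ("`b` realizes an additive cut"). -/
def IsReal (b : B) : Prop :=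
  0 < b ∧ b ∉ Set.range ⇑e ∧
    ∀ x y : A, 0 ≤ e x → e x ≤ b → 0 ≤ e y → e y ≤ b → e (x + y) ≤ b

/-- The convex subgroup (as a set) associated to a realizer `b`. -/
def Hcar (b : B) : Set A := {a : A | |e a| < b}

variable {e}

lemma map_abs (he : Monotone ⇑e) (a : A) : e |a| = |e a| := by
  rcases le_total a 0 with h | h
  · rw [abs_of_nonpos h, map_neg, abs_of_nonpos (by simpa using he h)]
  · rw [abs_of_nonneg h, abs_of_nonneg (by simpa using he h)]

lemma Hcar_zero_mem {b : B} (hb : IsReal e b) : (0 : A) ∈ Hcar e b := by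
  simp [Hcar, hb.1]

lemma Hcar_neg_mem {b : B} {a : A} (ha : a ∈ Hcar e b) : (-a) ∈ Hcar e b := by
  simpa [Hcar] using ha

lemma Hcar_add_mem (he : StrictMono ⇑e) {b : B} (hb : IsReal e b) {a a' : A}
    (ha : a ∈ Hcar e b) (ha' : a' ∈ Hcar e b) : a + a' ∈ Hcar e b := by
  obtain ⟨hb0, hbr, hadd⟩ := hb
  have habs : ∀ x : A, x ∈ Hcar e b → e |x| ≤ b := by
    intro x hx
    rw [map_abs he.monotone]
    exact le_of_lt hx
  have h3 : e (|a| + |a'|) ≤ b :=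
    hadd _ _ (by rw [map_abs he.monotone]; exact abs_nonneg _) (habs _ ha)
      (by rw [map_abs he.monotone]; exact abs_nonneg _) (habs _ ha')
  have h4 : e (|a| + |a'|) < b := lt_of_le_of_ne h3 (fun h => hbr ⟨_, h⟩)
  have h5 : |e (a + a')| ≤ e (|a| + |a'|) := by
    rw [← map_abs he.monotone]
    exact he.monotone (abs_add_le a a')
  exact lt_of_le_of_lt h5 h4

lemma Hcar_convex (he : StrictMono ⇑e) {b : B} {a x : A}
    (ha : a ∈ Hcar e b) (hx0 : 0 ≤ x) (hxa : x ≤ a) : x ∈ Hcar e b := by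
  have : |e x| ≤ |e a| := by
    rw [← map_abs he.monotone, ← map_abs he.monotone]
    exact he.monotone (abs_le_abs hxa (le_trans (neg_nonpos_of_nonneg hx0) (hx0.trans hxa)))
  exact lt_of_le_of_lt this ha

/-- The convex subgroup associated to a realizer. -/
def HGrp (e : A →+ B) (b : B) (he : StrictMono ⇑e) (hb : IsReal e b) : AddSubgroup A where
  carrier := Hcar e b
  zero_mem' := Hcar_zero_mem hb
  add_mem' := fun h h' => Hcar_add_mem he hb h h'
  neg_mem' := fun h => Hcar_neg_mem h

@[simp] lemma mem_HGrp {b : B} {he : StrictMono ⇑e} {hb : IsReal e b} {a : A} :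
    a ∈ HGrp e b he hb ↔ a ∈ Hcar e b := Iff.rfl

lemma Hcar_nsmul_mem (he : StrictMono ⇑e) {b : B} (hb : IsReal e b) {a : A}
    (ha : a ∈ Hcar e b) (n : ℕ) : n • a ∈ Hcar e b :=
  AddSubgroup.nsmul_mem (HGrp e b he hb) ha n

lemma Hcar_nsmul_mem_iff (he : StrictMono ⇑e) {b : B} (hb : IsReal e b) {a : A}
    {n : ℕ} (hn : 0 < n) : n • a ∈ Hcar e b ↔ a ∈ Hcar e b := by
  constructor
  · intro h
    have h1 : |e a| ≤ n • |e a| := by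
      calc |e a| = 1 • |e a| := (one_smul _ _).symm
      _ ≤ n • |e a| := nsmul_le_nsmul_left (abs_nonneg _) hn
    have h2 : |e (n • a)| = n • |e a| := by
      rw [map_nsmul, abs_nsmul]
    exact lt_of_le_of_lt (h1.trans_eq h2.symm) h
  · intro h; exact Hcar_nsmul_mem he hb h n

lemma Real.lt_of_not_mem (he : StrictMono ⇑e) {b : B} (hb : IsReal e b) {y : A}
    (hy : 0 < y) (hy' : y ∉ Hcar e b) : b < e y := by
  have hey : 0 < e y := by simpa using he hy
  have : ¬ (|e y| < b) := hy'
  rw [abs_of_pos hey] at this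
  exact lt_of_le_of_ne (not_lt.mp this) (fun h => hb.2.1 ⟨y, h.symm⟩)

lemma Real.lt_of_mem (he : StrictMono ⇑e) {b : B} {y : A}
    (hy : y ∈ Hcar e b) : e y < b := lt_of_le_of_lt (le_abs_self _) hy

end Real

section Cut

variable {A : Type u} {B : Type v} [AddCommGroup A] [LinearOrder A] [IsOrderedAddMonoid A]
  [AddCommGroup B] [LinearOrder B] [IsOrderedAddMonoid B] {e : A →+ B}

lemma Real.nsmul_lt (he : StrictMono ⇑e) (hA : NatDivisible A) {b : B} (hb : IsReal e b)
    {k : ℕ} (hk : 0 < k) {y : A} (hy : 0 < y) (hy' : y ∉ Hcar e b) : k • b < e y := by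
  obtain ⟨u, hu⟩ := hA k hk y
  have hu0 : 0 < u := by
    by_contra h
    exact absurd (hu ▸ nsmul_nonpos (not_lt.mp h) k) (not_le.mpr hy)
  have hu' : u ∉ Hcar e b := by
    intro h
    exact hy' (hu ▸ Hcar_nsmul_mem he hb h k)
  have h1 : b < e u := Real.lt_of_not_mem he hb hu0 hu'
  calc k • b < k • e u := nsmul_lt_nsmul_right hk.ne' h1
  _ = e (k • u) := (map_nsmul e k u).symm
  _ = e y := by rw [hu]

lemma Real.lt_nsmul (he : StrictMono ⇑e) {b : B} (hb : IsReal e b)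
    {k : ℕ} (hk : 0 < k) {y : A} (hy : y ≤ 0 ∨ y ∈ Hcar e b) : e y < k • b := by
  have hbk : b ≤ k • b := by
    calc b = 1 • b := (one_smul _ _).symm
    _ ≤ k • b := nsmul_le_nsmul_left hb.1.le hk
  rcases hy with hy | hy
  · calc e y ≤ 0 := by simpa using he.monotone hy
    _ < b := hb.1
    _ ≤ k • b := hbk
  · exact lt_of_lt_of_le (Real.lt_of_mem he hy) hbk

lemma Real.nsmul_not_mem_range (he : StrictMono ⇑e) (hA : NatDivisible A) {b : B}
    (hb : IsReal e b) {k : ℕ} (hk : 0 < k) : k • b ∉ Set.range ⇑e := by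
  rintro ⟨w, hw⟩
  obtain ⟨u, hu⟩ := hA k hk w
  have : k • e u = k • b := by rw [← map_nsmul, hu, hw]
  rcases lt_trichotomy (e u) b with h | h | h
  · exact absurd this (ne_of_lt (nsmul_lt_nsmul_right hk.ne' h))
  · exact hb.2.1 ⟨u, h⟩
  · exact absurd this.symm (ne_of_lt (nsmul_lt_nsmul_right hk.ne' h))

lemma Real.le_nsmul_iff (he : StrictMono ⇑e) (hA : NatDivisible A) {b : B}
    (hb : IsReal e b) {k : ℕ} (hk : 0 < k) (y : A) :
    e y ≤ k • b ↔ ¬ (0 < y ∧ y ∉ Hcar e b) := by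
  constructor
  · intro h hy
    exact absurd h (not_le.mpr (Real.nsmul_lt he hA hb hk hy.1 hy.2))
  · intro h
    rcases not_and_or.mp h with h | h
    · exact (Real.lt_nsmul he hb hk (Or.inl (not_lt.mp h))).le
    · exact (Real.lt_nsmul he hb hk (Or.inr (not_not.mp h))).le

lemma Real.nsmul_le_iff (he : StrictMono ⇑e) (hA : NatDivisible A) {b : B}
    (hb : IsReal e b) {k : ℕ} (hk : 0 < k) (y : A) :
    k • b ≤ e y ↔ (0 < y ∧ y ∉ Hcar e b) := by
  constructor
  · intro h
    by_contra hc
    rcases not_and_or.mp hc with hc | hc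
    · exact absurd (lt_of_le_of_lt h (Real.lt_nsmul he hb hk (Or.inl (not_lt.mp hc)))) (lt_irrefl _)
    · exact absurd (lt_of_le_of_lt h (Real.lt_nsmul he hb hk (Or.inr (not_not.mp hc)))) (lt_irrefl _)
  · intro h
    exact (Real.nsmul_lt he hA hb hk h.1 h.2).le

/-- Commensurable realizers have the same convex subgroup. -/
lemma Hcar_subset_of_comm (he : StrictMono ⇑e) (hA : NatDivisible A) {b b' : B} (hb : IsReal e b) (hb' : IsReal e b')
    {n : ℕ} (hn : 0 < n) (h1 : b < n • b') : Hcar e b ⊆ Hcar e b' := by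
  intro a ha
  by_contra ha'
  have haa : |a| ∈ Hcar e b := by
    rcases abs_choice a with h | h
    · rwa [h]
    · rw [h]; exact Hcar_neg_mem ha
  have haa' : |a| ∉ Hcar e b' := by
    intro h
    rcases abs_choice a with h2 | h2
    · exact ha' (h2 ▸ h)
    · have := Hcar_neg_mem (h2 ▸ h : -a ∈ Hcar e b')
      rw [neg_neg] at this
      exact ha' this
  have h0 : 0 < |a| := by
    rcases eq_or_ne a 0 with rfl | h2
    · exact absurd (Hcar_zero_mem hb') (by simpa using ha')
    · exact abs_pos.mpr h2
  have k1 : n • b' < e |a| := Real.nsmul_lt he hA hb' hn h0 haa'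
  have k2 : e |a| < b := Real.lt_of_mem he haa
  exact absurd (k2.trans h1) (not_lt.mpr k1.le)

lemma Hcar_eq_of_comm (he : StrictMono ⇑e) (hA : NatDivisible A) {b b' : B}
    (hb : IsReal e b) (hb' : IsReal e b') {n : ℕ} (hn : 0 < n)
    (h1 : b < n • b') (h2 : b' < n • b) : Hcar e b = Hcar e b' :=
  le_antisymm (Hcar_subset_of_comm he hA hb hb' hn h1) (Hcar_subset_of_comm he hA hb' hb hn h2)

end Cut

section More

variable {A : Type u} {B : Type v} [AddCommGroup A] [LinearOrder A] [IsOrderedAddMonoid A]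
  [AddCommGroup B] [LinearOrder B] [IsOrderedAddMonoid B] {e : A →+ B}

lemma incomm_cases {b b' : B} (hb0 : 0 < b) (hb0' : 0 < b')
    (h : ∀ n : ℕ, ¬ (b < n • b' ∧ b' < n • b)) :
    (∀ n : ℕ, n • b < b') ∨ (∀ n : ℕ, n • b' < b) := by
  by_contra hc
  push_neg at hc
  obtain ⟨⟨n₁, h₁⟩, ⟨n₂, h₂⟩⟩ := hc
  refine h (n₁ + n₂ + 1) ⟨?_, ?_⟩
  · calc b ≤ n₂ • b' := h₂
    _ < (n₁ + n₂ + 1) • b' := nsmul_lt_nsmul_left hb0' (by omega)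
  · calc b' ≤ n₁ • b := h₁
    _ < (n₁ + n₂ + 1) • b := nsmul_lt_nsmul_left hb0 (by omega)

lemma sum_small {ι : Type*} {y : B} (hy : 0 < y) (s : Finset ι) (f : ι → B)
    (h : ∀ i ∈ s, ∀ n : ℕ, n • f i < y) : ∀ n : ℕ, n • (∑ i ∈ s, f i) < y := by
  classical
  induction s using Finset.induction_on with
  | empty => intro n; simpa using hy
  | @insert a s ha ih =>
    intro n
    have h2a : (2 * n) • f a < y := h a (Finset.mem_insert_self a s) (2 * n)
    have h2s : (2 * n) • (∑ i ∈ s, f i) < y :=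
      ih (fun i hi => h i (Finset.mem_insert_of_mem hi)) (2 * n)
    have key : 2 • (n • (f a + ∑ i ∈ s, f i)) < 2 • y := by
      rw [← mul_smul]
      calc (2 * n) • (f a + ∑ i ∈ s, f i)
          = (2 * n) • f a + (2 * n) • (∑ i ∈ s, f i) := smul_add _ _ _
        _ < y + y := add_lt_add h2a h2s
        _ = 2 • y := (two_nsmul y).symm
    rw [Finset.sum_insert ha]
    exact lt_of_nsmul_lt_nsmul_right 2 key

lemma nsmul_pos_iff' {y : A} {n : ℕ} (hn : 0 < n) : 0 < n • y ↔ 0 < y := by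
  constructor
  · intro h
    by_contra hc
    exact absurd (nsmul_nonpos (not_lt.mp hc) n) (not_le.mpr h)
  · intro h; exact nsmul_pos h hn.ne'

lemma aux_iff (he : StrictMono ⇑e) {b : B} (hb : IsReal e b) {n : ℕ} (hn : 0 < n) (y : A) :
    (0 < n • y ∧ n • y ∉ Hcar e b) ↔ (0 < y ∧ y ∉ Hcar e b) := by
  rw [nsmul_pos_iff' hn, Hcar_nsmul_mem_iff he hb hn]

lemma cut_left (he : StrictMono ⇑e) (hA : NatDivisible A) {b : B} (hb : IsReal e b)
    {M k : ℕ} (hM : 0 < M) (hk : 0 < k) (w : A) (γ : B)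
    (hγ : M • γ = k • b - e w) (x : A) :
    e x ≤ γ ↔ ¬ (0 < M • x + w ∧ M • x + w ∉ Hcar e b) := by
  rw [← Real.le_nsmul_iff he hA hb hk (M • x + w)]
  constructor
  · intro h
    have h1 : M • e x ≤ M • γ := nsmul_le_nsmul_right h M
    rw [hγ] at h1
    have h2 : M • e x + e w ≤ k • b := le_sub_iff_add_le.mp h1
    calc e (M • x + w) = M • e x + e w := by rw [map_add, map_nsmul]
    _ ≤ k • b := h2
  · intro h
    have h1 : M • e x + e w ≤ k • b := by
      calc M • e x + e w = e (M • x + w) := by rw [map_add, map_nsmul]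
      _ ≤ k • b := h
    have h2 : M • e x ≤ M • γ := by rw [hγ, le_sub_iff_add_le]; exact h1
    exact le_of_nsmul_le_nsmul_right hM.ne' h2

lemma cut_right (he : StrictMono ⇑e) (hA : NatDivisible A) {b : B} (hb : IsReal e b)
    {M k : ℕ} (hM : 0 < M) (hk : 0 < k) (w : A) (γ : B)
    (hγ : M • γ = e w - k • b) (x : A) :
    e x ≤ γ ↔ (0 < w - M • x ∧ w - M • x ∉ Hcar e b) := by
  rw [← Real.nsmul_le_iff he hA hb hk (w - M • x)]
  constructor
  · intro h
    have h1 : M • e x ≤ M • γ := nsmul_le_nsmul_right h M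
    rw [hγ] at h1
    have h2 : k • b ≤ e w - M • e x := by
      rw [le_sub_iff_add_le, add_comm]
      exact le_sub_iff_add_le.mp h1
    calc k • b ≤ e w - M • e x := h2
    _ = e (w - M • x) := by rw [map_sub, map_nsmul]
  · intro h
    have h1 : k • b ≤ e w - M • e x := by
      calc k • b ≤ e (w - M • x) := h
      _ = e w - M • e x := by rw [map_sub, map_nsmul]
    have h2 : M • e x ≤ M • γ := by
      rw [hγ, le_sub_iff_add_le, add_comm]
      exact le_sub_iff_add_le.mp h1
    exact le_of_nsmul_le_nsmul_right hM.ne' h2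

end More

section Dep

lemma int_dep (r : ℕ) (z : Fin (r + 1) → Fin r → ℤ) :
    ∃ u : Fin (r + 1) → ℤ, (∃ i, u i ≠ 0) ∧ ∀ j, (∑ i, u i * z i j) = 0 := by
  classical
  set v : Fin (r + 1) → (Fin r → ℚ) := fun i j => (z i j : ℚ) with hv
  have hnl : ¬ LinearIndependent ℚ v := by
    intro hli
    have := hli.fintype_card_le_finrank
    rw [Module.finrank_fin_fun, Fintype.card_fin] at this
    omega
  obtain ⟨q, hq, i₀, hqi₀⟩ := Fintype.not_linearIndependent_iff.mp hnl
  set u : Fin (r + 1) → ℤ :=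
    fun i => (q i).num * ∏ i' ∈ Finset.univ.erase i, ((q i').den : ℤ) with hu
  have hden : ∀ i : Fin (r + 1), ((q i).den : ℚ) ≠ 0 :=
    fun i => Nat.cast_ne_zero.mpr (q i).den_nz
  have hcast : ∀ i, (u i : ℚ) = q i * ∏ i', ((q i').den : ℚ) := by
    intro i
    have hnum : ((q i).num : ℚ) = q i * ((q i).den : ℚ) := by
      have h : ((q i).num : ℚ) = ((q i).num / ((q i).den : ℚ)) * ((q i).den : ℚ) :=
        (div_mul_cancel₀ _ (hden i)).symm
      rwa [Rat.num_div_den] at h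
    rw [hu]
    push_cast
    rw [hnum, mul_assoc]
    congr 1
    exact Finset.mul_prod_erase Finset.univ (fun i' => ((q i').den : ℚ)) (Finset.mem_univ i)
  refine ⟨u, ⟨i₀, ?_⟩, ?_⟩
  · rw [hu]
    refine mul_ne_zero (Rat.num_ne_zero.mpr hqi₀) ?_
    rw [Finset.prod_ne_zero_iff]
    intro a _
    exact_mod_cast (q a).den_nz
  · intro j
    have hqj : (∑ i, q i * (z i j : ℚ)) = 0 := by
      have := congrFun hq j
      simpa using this
    have : ((∑ i, u i * z i j : ℤ) : ℚ) = 0 := by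
      push_cast
      calc (∑ i, (u i : ℚ) * (z i j : ℚ))
          = ∑ i, q i * (∏ i', ((q i').den : ℚ)) * (z i j : ℚ) := by
            refine Finset.sum_congr rfl fun i _ => ?_
            rw [hcast i]
        _ = (∏ i', ((q i').den : ℚ)) * ∑ i, q i * (z i j : ℚ) := by
            rw [Finset.mul_sum]
            refine Finset.sum_congr rfl fun i _ => by ring
        _ = 0 := by rw [hqj, mul_zero]
    exact_mod_cast this

end Dep

section Antichain

variable {A : Type u} {B : Type v} [AddCommGroup A] [LinearOrder A] [IsOrderedAddMonoid A]
  [AddCommGroup B] [LinearOrder B] [IsOrderedAddMonoid B] {e : A →+ B}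

lemma no_antichain (he : StrictMono ⇑e) (hA : NatDivisible A)
    {r : ℕ} {g : Fin r → B}
    (hfg : ∀ x : B, ∃ N : ℕ, 0 < N ∧ ∃ (a : A) (z : Fin r → ℤ), N • x = e a + ∑ i, z i • g i)
    (c : Fin (r + 1) → B) (hreal : ∀ i, IsReal e (c i))
    (hpair : ∀ i j, i ≠ j → ∀ n : ℕ, ¬ (c i < n • c j ∧ c j < n • c i)) : False := by
  classical
  choose N hN a z hz using fun i => hfg (c i)
  obtain ⟨u, ⟨i₀, hu₀⟩, hurel⟩ := int_dep r (fun i j => z i j)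
  set t : Fin (r + 1) → ℤ := fun i => u i * (N i : ℤ) with ht
  set astar : A := ∑ i, u i • a i with hastar
  have hsum : ∑ i, t i • c i = e astar := by
    have h1 : ∀ i, t i • c i = u i • (e (a i)) + ∑ j, (u i * z i j) • g j := by
      intro i
      have h2 : t i • c i = u i • ((N i) • c i) := by
        rw [ht]
        simp only []
        rw [← natCast_zsmul (c i) (N i), smul_smul]
      rw [h2, hz i, smul_add]
      congr 1
      rw [Finset.smul_sum]
      refine Finset.sum_congr rfl fun j _ => ?_
      rw [smul_smul]
    calc ∑ i, t i • c i
        = ∑ i, (u i • e (a i) + ∑ j, (u i * z i j) • g j) :=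
          Finset.sum_congr rfl (fun i _ => h1 i)
      _ = (∑ i, u i • e (a i)) + ∑ i, ∑ j, (u i * z i j) • g j := Finset.sum_add_distrib
      _ = e astar + ∑ j, (∑ i, u i * z i j) • g j := by
          congr 1
          · rw [hastar, map_sum]
            exact Finset.sum_congr rfl fun i _ => (map_zsmul e (u i) (a i)).symm
          · rw [Finset.sum_comm]
            exact Finset.sum_congr rfl fun j _ => Finset.sum_smul.symm
      _ = e astar := by
          have : ∀ j : Fin r, (∑ i, u i * z i j) • g j = (0 : B) := by
            intro j; rw [hurel j, zero_smul]
          rw [Finset.sum_congr rfl (fun j _ => this j), Finset.sum_const, smul_zero, add_zero]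
  set S : Finset (Fin (r + 1)) := Finset.univ.filter (fun i => t i ≠ 0) with hS
  have hi₀S : i₀ ∈ S := by
    simp only [hS, Finset.mem_filter, Finset.mem_univ, true_and, ht]
    exact mul_ne_zero hu₀ (by exact_mod_cast (hN i₀).ne')
  obtain ⟨im, himS, hmax⟩ := S.exists_max_image c ⟨i₀, hi₀S⟩
  have hcpos : ∀ i, 0 < c i := fun i => (hreal i).1
  have hsmall : ∀ i ∈ S.erase im, ∀ n : ℕ, n • ((t i).natAbs • c i) < c im := by
    intro i hi n
    have hii : i ≠ im := Finset.ne_of_mem_erase hi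
    have hord : ∀ m : ℕ, m • c i < c im := by
      rcases incomm_cases (hcpos i) (hcpos im) (hpair i im hii) with h | h
      · exact h
      · exact absurd (hmax i (Finset.mem_of_mem_erase hi)) (not_le.mpr (by simpa using h 1))
    rw [smul_smul]
    exact hord _
  set W : B := ∑ i ∈ S.erase im, (t i).natAbs • c i with hW
  have hWsmall : ∀ n : ℕ, n • W < c im := sum_small (hcpos im) _ _ hsmall
  set R : B := ∑ i ∈ S.erase im, t i • c i with hR
  have habs_t : ∀ i, |t i • c i| = (t i).natAbs • c i := by
    intro i
    rw [abs_zsmul, abs_of_pos (hcpos i), Int.abs_eq_natAbs, natCast_zsmul]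
  have hRW : |R| ≤ W := by
    calc |R| ≤ ∑ i ∈ S.erase im, |t i • c i| := Finset.abs_sum_le_sum_abs _ _
      _ = W := Finset.sum_congr rfl fun i _ => habs_t i
  have hsum2 : e astar = t im • c im + R := by
    rw [← hsum]
    have h3 : ∑ i, t i • c i = ∑ i ∈ S, t i • c i := by
      symm; apply Finset.sum_subset (Finset.subset_univ S)
      intro x _ hx
      have : t x = 0 := by simpa [hS] using hx
      rw [this, zero_smul]
    rw [h3, ← Finset.add_sum_erase _ _ himS]
  set k : ℕ := (t im).natAbs with hk
  have hk0 : 0 < k := Int.natAbs_pos.mpr (by simpa [hS] using himS)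
  have habs : |e astar| ≤ k • c im + W := by
    calc |e astar| = |t im • c im + R| := by rw [hsum2]
      _ ≤ |t im • c im| + |R| := abs_add_le _ _
      _ = k • c im + |R| := by rw [habs_t im]
      _ ≤ k • c im + W := add_le_add_right hRW _
  have hup : c im ≤ k • c im := by
    calc c im = 1 • c im := (one_smul _ _).symm
      _ ≤ k • c im := nsmul_le_nsmul_left (hcpos im).le hk0
  have heabs : e |astar| = |e astar| := map_abs he.monotone _
  by_cases hcase : 0 < |astar| ∧ |astar| ∉ Hcar e (c im)
  · have h1 : (2 * k) • c im < e |astar| :=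
      Real.nsmul_lt he hA (hreal im) (by omega) hcase.1 hcase.2
    have hW1 : W < c im := by simpa using hWsmall 1
    have h3 : |e astar| < (2 * k) • c im := by
      calc |e astar| ≤ k • c im + W := habs
        _ < k • c im + k • c im := add_lt_add_right (hW1.trans_le hup) _
        _ = (2 * k) • c im := by rw [two_mul, add_nsmul]
    rw [← heabs] at h3
    exact absurd (h1.trans h3) (lt_irrefl _)
  · have hcond : 2 • |astar| ≤ 0 ∨ 2 • |astar| ∈ Hcar e (c im) := by
      rcases not_and_or.mp hcase with h | h
      · exact Or.inl (nsmul_nonpos (not_lt.mp h) 2)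
      · exact Or.inr (Hcar_nsmul_mem he (hreal im) (not_not.mp h) 2)
    have h1 : e (2 • |astar|) < 1 • c im := Real.lt_nsmul he (hreal im) one_pos hcond
    have ha' : 2 • e |astar| < c im := by
      rw [← map_nsmul]
      simpa using h1
    have h2 : 2 • (e |astar| + W) < 2 • c im := by
      rw [smul_add]
      calc 2 • e |astar| + 2 • W < c im + c im := add_lt_add ha' (hWsmall 2)
        _ = 2 • c im := (two_nsmul _).symm
    have h3 : e |astar| + W < c im := lt_of_nsmul_lt_nsmul_right 2 h2
    have h4 : c im ≤ e |astar| + W := by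
      have h5 : t im • c im = e astar - R := eq_sub_of_add_eq hsum2.symm
      calc c im ≤ k • c im := hup
        _ = |t im • c im| := (habs_t im).symm
        _ = |e astar - R| := by rw [h5]
        _ ≤ |e astar| + |R| := by
            rw [sub_eq_add_neg]
            calc |e astar + -R| ≤ |e astar| + |-R| := abs_add_le _ _
              _ = |e astar| + |R| := by rw [abs_neg]
        _ ≤ |e astar| + W := add_le_add_right hRW _
        _ = e |astar| + W := by rw [heabs]
    exact absurd (lt_of_le_of_lt h4 h3) (lt_irrefl _)

end Antichain

section Exists

variable {A B : Type u} [AddCommGroup A] [LinearOrder A] [IsOrderedAddMonoid A] [AddCommGroup B] [LinearOrder B] [IsOrderedAddMonoid B]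

lemma exists_real (hA : NatDivisible A) (hic : IComplete A) (hB : NatDivisible B)
    (e : A →+ B) (he : StrictMono ⇑e) (β : B) (hβ : β ∉ Set.range ⇑e) :
    ∃ b : B, IsReal e b ∧ ∃ N : ℕ, 0 < N ∧ ∃ (a : A) (z : ℤ), z ≠ 0 ∧ N • b = e a + z • β := by
  classical
  set Γ : AddSubgroup B :=
    { carrier := {x | ∃ n : ℤ, 0 < n ∧ ∃ (a : A) (z : ℤ), n • x = e a + z • β}
      zero_mem' := ⟨1, one_pos, 0, 0, by simp⟩
      add_mem' := by
        rintro x y ⟨n, hn, a, z, hx⟩ ⟨n', hn', a', z', hy⟩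
        refine ⟨n * n', mul_pos hn hn', n' • a + n • a', n' * z + n * z', ?_⟩
        have h1 : (n * n') • (x + y) = n' • (n • x) + n • (n' • y) := by
          rw [smul_add, smul_smul, smul_smul, mul_comm n' n]
        rw [h1, hx, hy, smul_add, smul_add, smul_smul, smul_smul, map_add, map_zsmul, map_zsmul, add_smul]
        abel
      neg_mem' := by
        rintro x ⟨n, hn, a, z, hx⟩
        exact ⟨n, hn, -a, -z, by rw [smul_neg, hx, map_neg, neg_add, neg_smul]⟩ } with hΓ
  have hβΓ : β ∈ Γ := ⟨1, one_pos, 0, 1, by simp⟩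
  have heΓ : ∀ x : A, e x ∈ Γ := fun x => ⟨1, one_pos, x, 0, by simp⟩
  set e' : A →+ ↥Γ := e.codRestrict Γ heΓ with he'
  have he's : StrictMono ⇑e' := by
    intro x y h
    exact Subtype.mk_lt_mk.mpr (he h)
  have hΓdiv : NatDivisible ↥Γ := by
    rintro k hk ⟨v, n, hn, a, z, hv⟩
    obtain ⟨y, hy⟩ := hB k hk v
    refine ⟨⟨y, n * k, by positivity, a, z, ?_⟩, ?_⟩
    · have : (n * (k : ℤ)) • y = n • ((k:ℤ) • y) := mul_smul _ _ _
      rw [this, natCast_zsmul, hy, hv]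
    · apply Subtype.ext
      simpa using hy
  have hnsurj : ¬ Function.Surjective ⇑e' := by
    intro hs
    obtain ⟨x, hx⟩ := hs ⟨β, hβΓ⟩
    exact hβ ⟨x, congrArg Subtype.val hx⟩
  have hnext : ¬ IsIExtension e' := fun h => hnsurj (hic ↥Γ hΓdiv e' h)
  rw [IsIExtension, not_and] at hnext
  have hnext2 := hnext he's
  push_neg at hnext2
  obtain ⟨b, hb0, hbadd⟩ := hnext2
  have hble : ∀ x : A, (e' x ≤ b ↔ e x ≤ b.1) := fun x => Iff.rfl
  have hb01 : (0 : B) < b.1 := hb0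
  have hadd' : ∀ x y : A, 0 ≤ e x → e x ≤ b.1 → 0 ≤ e y → e y ≤ b.1 → e (x + y) ≤ b.1 := by
    intro x y hx0 hx1 hy0 hy1
    have h := hbadd x y ⟨hx0, hx1⟩ ⟨hy0, hy1⟩
    exact h.2
  have hbr : b.1 ∉ Set.range ⇑e := by
    rintro ⟨v, hv⟩
    have hv0 : 0 < v := by
      have : e 0 < e v := by rw [map_zero, hv]; exact hb01
      exact he.lt_iff_lt.mp this
    have hev : 0 ≤ e v := le_of_lt (by rw [hv]; exact hb01)
    have h := hadd' v v hev (le_of_eq hv) hev (le_of_eq hv)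
    have h2 : e (v + v) ≤ e v := by rw [hv]; exact h
    have h3 : v + v ≤ v := he.le_iff_le.mp h2
    have h4 : v ≤ 0 := add_le_iff_nonpos_left.mp h3
    exact absurd hv0 (not_lt.mpr h4)
  obtain ⟨n, hn, a, z, hnb⟩ := b.2
  have hzne : z ≠ 0 := by
    rintro rfl
    obtain ⟨u, hu⟩ := hA n.toNat (by omega) a
    have h1 : n • b.1 = e a := by simpa using hnb
    have h2 : n • b.1 = n • e u := by
      rw [h1, ← hu, map_nsmul, ← natCast_zsmul (e u) n.toNat, Int.toNat_of_nonneg hn.le]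
    exact hbr ⟨u, (zsmul_right_injective hn.ne' h2).symm⟩
  refine ⟨b.1, ⟨hb01, hbr, hadd'⟩, n.toNat, by omega, a, z, hzne, ?_⟩
  rw [← natCast_zsmul b.1 n.toNat, Int.toNat_of_nonneg hn.le]
  exact hnb

end Exists

section Transversal

variable {A : Type u} {B : Type v} [AddCommGroup A] [LinearOrder A] [IsOrderedAddMonoid A]
  [AddCommGroup B] [LinearOrder B] [IsOrderedAddMonoid B] {e : A →+ B}

lemma exists_transversal (he : StrictMono ⇑e) (hA : NatDivisible A)
    {r : ℕ} {g : Fin r → B}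
    (hfg : ∀ x : B, ∃ N : ℕ, 0 < N ∧ ∃ (a : A) (z : Fin r → ℤ), N • x = e a + ∑ i, z i • g i) :
    ∃ F : Finset B, (∀ b ∈ F, IsReal e b) ∧
      (↑F : Set B).Pairwise (fun x y => ∀ n : ℕ, ¬ (x < n • y ∧ y < n • x)) ∧
      ∀ b : B, IsReal e b → ∃ t ∈ F, ∃ n : ℕ, 0 < n ∧ b < n • t ∧ t < n • b := by
  classical
  set P : B → B → Prop := fun x y => ∀ n : ℕ, ¬ (x < n • y ∧ y < n • x) with hP
  set 𝒮 : Set (Set B) := {T | (∀ b ∈ T, IsReal e b) ∧ T.Pairwise P} with h𝒮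
  have hub : ∀ c ⊆ 𝒮, IsChain (· ⊆ ·) c → ∃ ub ∈ 𝒮, ∀ s ∈ c, s ⊆ ub := by
    intro c hc hchain
    refine ⟨⋃₀ c, ⟨?_, ?_⟩, fun s hs => Set.subset_sUnion_of_mem hs⟩
    · rintro b ⟨s, hs, hbs⟩
      exact (hc hs).1 b hbs
    · rintro x ⟨s1, hs1, hx1⟩ y ⟨s2, hs2, hy2⟩ hxy
      rcases hchain.total hs1 hs2 with h | h
      · exact (hc hs2).2 (h hx1) hy2 hxy
      · exact (hc hs1).2 hx1 (h hy2) hxy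
  obtain ⟨T, hT⟩ := zorn_subset 𝒮 hub
  have hTmem : T ∈ 𝒮 := hT.prop
  have hmaxT : ∀ b : B, IsReal e b → ∃ t ∈ T, ∃ n : ℕ, b < n • t ∧ t < n • b := by
    intro b hb
    by_contra hcon
    push_neg at hcon
    have hPbt : ∀ t ∈ T, P b t := by
      intro t ht n hn
      exact absurd hn.2 (not_lt.mpr (hcon t ht n hn.1))
    have hmem : insert b T ∈ 𝒮 := by
      constructor
      · rintro x hx
        rcases Set.mem_insert_iff.mp hx with rfl | hx
        · exact hb
        · exact hTmem.1 x hx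
      · rw [Set.pairwise_insert]
        exact ⟨hTmem.2, fun t ht _ => ⟨hPbt t ht, fun n hn => hPbt t ht n ⟨hn.2, hn.1⟩⟩⟩
    have hbT : b ∈ T := hT.2 hmem (Set.subset_insert b T) (Set.mem_insert b T)
    have h2 : b < 2 • b := by
      rw [two_nsmul]
      exact lt_add_of_pos_left b hb.1
    exact absurd h2 (not_lt.mpr (hcon b hbT 2 h2))
  have hTfin : T.Finite := by
    by_contra hinf
    have : T.Infinite := hinf
    set f := this.natEmbedding with hf
    refine no_antichain he hA hfg (fun i : Fin (r + 1) => (f (i : ℕ)).1)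
      (fun i => hTmem.1 _ (f (i : ℕ)).2) ?_
    intro i j hij
    have hne : ((f (i : ℕ)).1 : B) ≠ (f (j : ℕ)).1 := by
      intro h
      exact hij (Fin.ext (by
        have := f.injective (Subtype.ext h)
        exact_mod_cast congrArg id this))
    exact hTmem.2 (f (i : ℕ)).2 (f (j : ℕ)).2 hne
  refine ⟨hTfin.toFinset, ?_, ?_, ?_⟩
  · intro b hb
    exact hTmem.1 b (hTfin.mem_toFinset.mp hb)
  · rw [Set.Finite.coe_toFinset]
    exact hTmem.2
  · intro b hb
    obtain ⟨t, ht, n, h1, h2⟩ := hmaxT b hb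
    have hn0 : 0 < n := by
      rcases Nat.eq_zero_or_pos n with rfl | h
      · exact absurd h1 (by simpa using not_lt.mpr hb.1.le)
      · exact h
    exact ⟨t, hTfin.mem_toFinset.mpr ht, n, hn0, h1, h2⟩

end Transversal

/-- Lemma C8 of Haskell–Hrushovski–Macpherson.  `A` is an
i-complete divisible ordered abelian group and `B` a divisible ordered abelian
extension of `A` (strictly monotone embedding `e`) which is finitely generated over
`A`, i.e. the `ℚ`-linear span of `A` and finitely many elements `g i` (`hfg`).  Then
there are finitely many distinct convex subgroups `H i` of `A`, positive integers
`m i`, and tuples `c i` in `B` realizing `q_{H i} ^ (m i)` over `A`, such that with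
`D` the `ℚ`-linear span of `A` together with all entries `c i j`, every
`β ∈ B ∖ A` is sandwiched between elements `β₁ ≤ β ≤ β₂` of `D ∖ A` defining the
same cut over `A` as `β`. -/
theorem finitely_generated_idominated (A : Type u) [AddCommGroup A] [LinearOrder A] [IsOrderedAddMonoid A]
    (hA : NatDivisible A) (hic : IComplete A)
    (B : Type u) [AddCommGroup B] [LinearOrder B] [IsOrderedAddMonoid B] (hB : NatDivisible B)
    (e : A →+ B) (he : StrictMono ⇑e)
    (r : ℕ) (g : Fin r → B)
    (hfg : ∀ x : B, ∃ N : ℕ, 0 < N ∧ ∃ (a : A) (z : Fin r → ℤ),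
      N • x = e a + ∑ i, z i • g i) :
    ∃ (k : ℕ) (H : Fin k → AddSubgroup A) (m : Fin k → ℕ)
      (c : (i : Fin k) → Fin (m i) → B),
      (∀ i : Fin k, ∀ h ∈ H i, ∀ a : A, 0 ≤ a → a ≤ h → a ∈ H i) ∧
      (∀ i j : Fin k, i ≠ j → H i ≠ H j) ∧
      (∀ i, 0 < m i) ∧
      (∀ i, RealizesQ e (H i) (c i)) ∧
      (∀ β : B, β ∉ Set.range ⇑e →
        ∃ β₁ : B,
          (∃ N : ℕ, 0 < N ∧ ∃ (a : A) (z : (i : Fin k) → Fin (m i) → ℤ),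
            N • β₁ = e a + ∑ i : Fin k, ∑ j : Fin (m i), z i j • c i j) ∧
          β₁ ∉ Set.range ⇑e ∧
        ∃ β₂ : B,
          (∃ N : ℕ, 0 < N ∧ ∃ (a : A) (z : (i : Fin k) → Fin (m i) → ℤ),
            N • β₂ = e a + ∑ i : Fin k, ∑ j : Fin (m i), z i j • c i j) ∧
          β₂ ∉ Set.range ⇑e ∧
          β₁ ≤ β ∧ β ≤ β₂ ∧
          {a : A | e a ≤ β₁} = {a : A | e a ≤ β} ∧
          {a : A | e a ≤ β} = {a : A | e a ≤ β₂}) := by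
  classical
  obtain ⟨F, hFreal, hFpair, hFcover⟩ := exists_transversal he hA hfg
  set s : Finset (Set A) := F.image (fun b => Hcar e b) with hs
  set k := s.card with hk
  set eqv := s.equivFin with heqv
  have hrep : ∀ i : Fin k, ∃ b, b ∈ F ∧ Hcar e b = ((eqv.symm i : ↥s) : Set A) := by
    intro i
    exact Finset.mem_image.mp (eqv.symm i).2
  choose rep hrepF hrepH using hrep
  have hrepreal : ∀ i, IsReal e (rep i) := fun i => hFreal _ (hrepF i)
  set HH : Fin k → AddSubgroup A := fun i => HGrp e (rep i) he (hrepreal i) with hHH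
  set Fi : Fin k → Finset B := fun i => F.filter (fun b => Hcar e b = Hcar e (rep i)) with hFi
  set m : Fin k → ℕ := fun i => (Fi i).card with hm
  set c : (i : Fin k) → Fin (m i) → B := fun i j => ((Fi i).orderIsoOfFin rfl j.rev : B) with hc
  have hcFi : ∀ i j, c i j ∈ Fi i := fun i j => ((Fi i).orderIsoOfFin rfl j.rev).2
  have hcF : ∀ i j, c i j ∈ F := fun i j => Finset.mem_of_mem_filter _ (hcFi i j)
  have hcreal : ∀ i j, IsReal e (c i j) := fun i j => hFreal _ (hcF i j)
  have hcH : ∀ i j, Hcar e (c i j) = Hcar e (rep i) := by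
    intro i j
    exact (Finset.mem_filter.mp (hcFi i j)).2
  have hHinj : ∀ i i' : Fin k, Hcar e (rep i) = Hcar e (rep i') → i = i' := by
    intro i i' h
    have h2 : (eqv.symm i : ↥s) = (eqv.symm i' : ↥s) :=
      Subtype.ext (by rw [← hrepH i, ← hrepH i', h])
    have h3 := congrArg eqv h2
    simpa using h3
  have hcinj : ∀ i (j j' : Fin (m i)), c i j = c i j' → j = j' := by
    intro i j j' h
    have h2 : ((Fi i).orderIsoOfFin rfl) j.rev = ((Fi i).orderIsoOfFin rfl) j'.rev :=
      Subtype.ext h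
    have h3 : j.rev = j'.rev := ((Fi i).orderIsoOfFin rfl).injective h2
    exact Fin.rev_injective h3
  have hcover : ∀ t ∈ F, ∃ i j, c i j = t ∧ Hcar e (rep i) = Hcar e t := by
    intro t ht
    have hmem : Hcar e t ∈ s := Finset.mem_image_of_mem _ ht
    set i := eqv ⟨Hcar e t, hmem⟩ with hi
    have h1 : Hcar e (rep i) = Hcar e t := by
      rw [hrepH i, hi, Equiv.symm_apply_apply]
    have htFi : t ∈ Fi i := Finset.mem_filter.mpr ⟨ht, h1.symm⟩
    set j0 := ((Fi i).orderIsoOfFin rfl).symm ⟨t, htFi⟩ with hj0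
    refine ⟨i, j0.rev, ?_, h1⟩
    show (((Fi i).orderIsoOfFin rfl) j0.rev.rev : B) = t
    rw [Fin.rev_rev, hj0, OrderIso.apply_symm_apply]
  refine ⟨k, HH, m, c, ?_, ?_, ?_, ?_, ?_⟩
  · -- convexity
    intro i h hmem a ha0 hah
    exact Hcar_convex he hmem ha0 hah
  · -- distinct
    intro i j hij hEq
    exact hij (hHinj i j (congrArg (fun (G : AddSubgroup A) => (G : Set A)) hEq))
  · -- m pos
    intro i
    exact Finset.card_pos.mpr ⟨rep i, Finset.mem_filter.mpr ⟨hrepF i, rfl⟩⟩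
  · -- RealizesQ
    intro i
    refine ⟨?_, ?_, ?_⟩
    · intro h hmem j
      refine Real.lt_of_mem he ?_
      rw [hcH]
      exact hmem
    · intro a ha0 hamem j
      have ha0' : 0 < a := by
        rcases eq_or_lt_of_le ha0 with rfl | h
        · exact absurd (Hcar_zero_mem (hrepreal i)) hamem
        · exact h
      refine Real.lt_of_not_mem he (hcreal i j) ha0' ?_
      rw [hcH]
      exact hamem
    · intro j j' hjj' n
      have hlt : c i j' < c i j := by
        have h1 : j'.rev < j.rev := Fin.rev_lt_rev.mpr hjj'
        exact ((Fi i).orderIsoOfFin rfl).lt_iff_lt.mpr h1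
      have hne : c i j' ≠ c i j := ne_of_lt hlt
      have hP := hFpair (Finset.mem_coe.mpr (hcF i j')) (Finset.mem_coe.mpr (hcF i j)) hne
      rcases incomm_cases (hcreal i j').1 (hcreal i j).1 hP with h | h
      · exact h n
      · exact absurd hlt (not_lt.mpr (by simpa using (h 1).le))
  · -- main clause
    intro β hβ
    obtain ⟨b, hbreal, N, hN, a, z, hz, hNb⟩ := exists_real hA hic hB e he β hβ
    obtain ⟨t, htF, n, hn, hbt, htb⟩ := hFcover b hbreal
    obtain ⟨i, j, hcij, hHit⟩ := hcover t htF
    have htreal : IsReal e t := hFreal t htF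
    have hHbt : Hcar e b = Hcar e t := Hcar_eq_of_comm he hA hbreal htreal hn hbt htb
    have hkey : ∀ coef : ℤ,
        (∑ i' : Fin k, ∑ j' : Fin (m i'), (if c i' j' = t then coef else 0) • c i' j')
          = coef • t := by
      intro coef
      have huniqi : ∀ i' j', c i' j' = t → i' = i := by
        intro i' j' hcc
        apply hHinj
        rw [← hcH i' j', hcc]
        exact hHit.symm
      have h1 : ∀ i' : Fin k,
          (∑ j' : Fin (m i'), (if c i' j' = t then coef else 0) • c i' j')
            = if i' = i then coef • t else 0 := by
        intro i'
        by_cases hii : i' = i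
        · subst hii
          rw [if_pos rfl, Finset.sum_eq_single j]
          · rw [if_pos hcij, hcij]
          · intro j' _ hj'
            rw [if_neg, zero_smul]
            intro hcc
            exact hj' (hcinj _ _ _ (hcc.trans hcij.symm))
          · intro hj
            exact absurd (Finset.mem_univ j) hj
        · rw [if_neg hii, Finset.sum_eq_zero]
          intro j' _
          rw [if_neg, zero_smul]
          intro hcc
          exact hii (huniqi _ _ hcc)
      rw [Finset.sum_congr rfl (fun i' _ => h1 i'),
        Finset.sum_ite_eq' Finset.univ i (fun _ => coef • t), if_pos (Finset.mem_univ i)]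
    rcases lt_trichotomy z 0 with hzneg | hz0 | hzpos
    · -- z < 0
      set p := (-z).toNat with hp'
      have hp : 0 < p := by omega
      have hpz : (p : ℤ) = -z := Int.toNat_of_nonneg (by omega)
      have h1 : z • β = N • b - e a := by rw [eq_sub_iff_add_eq, add_comm, ← hNb]
      have hzβ : p • β = e a - N • b := by
        rw [← natCast_zsmul β p, hpz, neg_smul, h1, neg_sub]
      obtain ⟨β₁, hβ₁⟩ := hB p hp (e a - (N * n) • t)
      obtain ⟨β₂, hβ₂⟩ := hB (p * n) (Nat.mul_pos hp hn) (e (n • a) - N • t)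
      have hb_nt : N • b < (N * n) • t := by
        rw [mul_smul]; exact nsmul_lt_nsmul_right hN.ne' hbt
      have ht_nb : N • t < (n * N) • b := by
        rw [mul_comm n N, mul_smul]; exact nsmul_lt_nsmul_right hN.ne' htb
      have hzβn : (p * n) • β = e (n • a) - (n * N) • b := by
        rw [mul_comm p n, mul_smul, hzβ, smul_sub, smul_smul, ← map_nsmul]
      have hβ₁β : β₁ ≤ β := by
        refine (lt_of_nsmul_lt_nsmul_right p ?_).le
        rw [hβ₁, hzβ]
        exact sub_lt_sub_left hb_nt _
      have hββ₂ : β ≤ β₂ := by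
        refine (lt_of_nsmul_lt_nsmul_right (p * n) ?_).le
        rw [hβ₂, hzβn]
        exact sub_lt_sub_left ht_nb _
      have hβ₁mem : ∃ N' : ℕ, 0 < N' ∧ ∃ (a' : A) (z' : (i' : Fin k) → Fin (m i') → ℤ),
          N' • β₁ = e a' + ∑ i' : Fin k, ∑ j' : Fin (m i'), z' i' j' • c i' j' := by
        refine ⟨p, hp, a,
          (fun i' j' => if c i' j' = t then -((N * n : ℕ) : ℤ) else 0), ?_⟩
        rw [hkey (-((N * n : ℕ) : ℤ)), hβ₁, neg_smul, natCast_zsmul]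
        abel
      have hβ₂mem : ∃ N' : ℕ, 0 < N' ∧ ∃ (a' : A) (z' : (i' : Fin k) → Fin (m i') → ℤ),
          N' • β₂ = e a' + ∑ i' : Fin k, ∑ j' : Fin (m i'), z' i' j' • c i' j' := by
        refine ⟨p * n, Nat.mul_pos hp hn, n • a,
          (fun i' j' => if c i' j' = t then -(N : ℤ) else 0), ?_⟩
        rw [hkey (-(N : ℤ)), hβ₂, neg_smul, natCast_zsmul]
        abel
      have hβ₁r : β₁ ∉ Set.range ⇑e := by
        rintro ⟨v, hv⟩
        refine Real.nsmul_not_mem_range he hA htreal (Nat.mul_pos hN hn) ⟨a - p • v, ?_⟩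
        rw [map_sub, map_nsmul e p v, hv, hβ₁]
        abel
      have hβ₂r : β₂ ∉ Set.range ⇑e := by
        rintro ⟨v, hv⟩
        refine Real.nsmul_not_mem_range he hA htreal hN ⟨n • a - (p * n) • v, ?_⟩
        rw [map_sub, map_nsmul e (p * n) v, hv, hβ₂]
        abel
      have cut1 := cut_right he hA hbreal hp hN a β hzβ
      have cut2 := cut_right he hA htreal hp (Nat.mul_pos hN hn) a β₁ hβ₁
      have cut3 := cut_right he hA htreal (Nat.mul_pos hp hn) hN (n • a) β₂ hβ₂
      refine ⟨β₁, hβ₁mem, hβ₁r, β₂, hβ₂mem, hβ₂r, hβ₁β, hββ₂, ?_, ?_⟩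
      · ext x
        simp only [Set.mem_setOf_eq]
        rw [cut2 x, cut1 x, hHbt]
      · ext x
        simp only [Set.mem_setOf_eq]
        rw [cut1 x, cut3 x, hHbt]
        have harg : n • a - (p * n) • x = n • (a - p • x) := by
          rw [smul_sub, mul_comm p n, mul_smul]
        rw [harg]
        exact (aux_iff he htreal hn _).symm
    · exact absurd hz0 hz
    · -- z > 0
      set zt := z.toNat with hzt'
      have hzt : 0 < zt := by omega
      have hztz : (zt : ℤ) = z := Int.toNat_of_nonneg hzpos.le
      have h1 : z • β = N • b - e a := by rw [eq_sub_iff_add_eq, add_comm, ← hNb]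
      have hzβ : zt • β = N • b - e a := by rw [← natCast_zsmul β zt, hztz, h1]
      obtain ⟨β₂, hβ₂⟩ := hB zt hzt ((N * n) • t - e a)
      obtain ⟨β₁, hβ₁⟩ := hB (zt * n) (Nat.mul_pos hzt hn) (N • t - e (n • a))
      have hb_nt : N • b < (N * n) • t := by
        rw [mul_smul]; exact nsmul_lt_nsmul_right hN.ne' hbt
      have ht_nb : N • t < (n * N) • b := by
        rw [mul_comm n N, mul_smul]; exact nsmul_lt_nsmul_right hN.ne' htb
      have hzβn : (zt * n) • β = (n * N) • b - e (n • a) := by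
        rw [mul_comm zt n, mul_smul, hzβ, smul_sub, smul_smul, ← map_nsmul]
      have hβ₁β : β₁ ≤ β := by
        refine (lt_of_nsmul_lt_nsmul_right (zt * n) ?_).le
        rw [hβ₁, hzβn]
        exact sub_lt_sub_right ht_nb _
      have hββ₂ : β ≤ β₂ := by
        refine (lt_of_nsmul_lt_nsmul_right zt ?_).le
        rw [hβ₂, hzβ]
        exact sub_lt_sub_right hb_nt _
      have hβ₁mem : ∃ N' : ℕ, 0 < N' ∧ ∃ (a' : A) (z' : (i' : Fin k) → Fin (m i') → ℤ),
          N' • β₁ = e a' + ∑ i' : Fin k, ∑ j' : Fin (m i'), z' i' j' • c i' j' := by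
        refine ⟨zt * n, Nat.mul_pos hzt hn, -(n • a),
          (fun i' j' => if c i' j' = t then (N : ℤ) else 0), ?_⟩
        rw [hkey (N : ℤ), hβ₁, map_neg, natCast_zsmul]
        abel
      have hβ₂mem : ∃ N' : ℕ, 0 < N' ∧ ∃ (a' : A) (z' : (i' : Fin k) → Fin (m i') → ℤ),
          N' • β₂ = e a' + ∑ i' : Fin k, ∑ j' : Fin (m i'), z' i' j' • c i' j' := by
        refine ⟨zt, hzt, -a,
          (fun i' j' => if c i' j' = t then ((N * n : ℕ) : ℤ) else 0), ?_⟩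
        rw [hkey ((N * n : ℕ) : ℤ), hβ₂, map_neg, natCast_zsmul]
        abel
      have hβ₁r : β₁ ∉ Set.range ⇑e := by
        rintro ⟨v, hv⟩
        refine Real.nsmul_not_mem_range he hA htreal hN ⟨(zt * n) • v + n • a, ?_⟩
        rw [map_add, map_nsmul e (zt * n) v, hv, hβ₁]
        abel
      have hβ₂r : β₂ ∉ Set.range ⇑e := by
        rintro ⟨v, hv⟩
        refine Real.nsmul_not_mem_range he hA htreal (Nat.mul_pos hN hn) ⟨zt • v + a, ?_⟩
        rw [map_add, map_nsmul e zt v, hv, hβ₂]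
        abel
      have cut1 := cut_left he hA hbreal hzt hN a β hzβ
      have cut2 := cut_left he hA htreal (Nat.mul_pos hzt hn) hN (n • a) β₁ hβ₁
      have cut3 := cut_left he hA htreal hzt (Nat.mul_pos hN hn) a β₂ hβ₂
      refine ⟨β₁, hβ₁mem, hβ₁r, β₂, hβ₂mem, hβ₂r, hβ₁β, hββ₂, ?_, ?_⟩
      · ext x
        simp only [Set.mem_setOf_eq]
        rw [cut2 x, cut1 x, hHbt]
        have harg : (zt * n) • x + n • a = n • (zt • x + a) := by
          rw [smul_add, mul_comm zt n, mul_smul]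
        rw [harg]
        exact not_congr (aux_iff he htreal hn _)
      · ext x
        simp only [Set.mem_setOf_eq]
        rw [cut1 x, cut3 x, hHbt]

end Stmt19
end
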